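/- Let a functional φ ∈ Φ be ci-differentiable at every point (τ,z,w(·)) ∈ G with τ < ϑ, satisfy the Hamilton–Jacobi equation ∂^{ci}_{τ,w} φ(τ,z,w(·)) + H(τ,z,w(·), ∇_z φ(τ,z,w(·))) = 0 at all these points, and satisfy the terminal condition φ(ϑ,z,w(·)) = σ(z,w(·)). Then φ is a viscosity solution of the Cauchy problem. -/

import Mathlib

noncomputable section

open MeasureTheory Set Filter Topology Asymptotics RealInnerProductSpace
open scoped NNReal

namespace DGPaper

abbrev E (n : ℕ) : Type := EuclideanSpace ℝ (Fin n)

variable {n l m : ℕ}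

/-- `x` is piecewise continuous on `[a,b)` (equivalently `[a,b]`, the value at `b` being free):
there is a finite partition `a = ξ₀ < ξ₁ < … = b` such that `x` is continuous on each
`[ξ i, ξ (i+1))` and has a finite left limit at each `ξ (i+1)`. -/
def PCOn (x : ℝ → E n) (a b : ℝ) : Prop :=
  ∃ k : ℕ, ∃ ξ : Fin (k + 2) → ℝ, StrictMono ξ ∧ ξ 0 = a ∧ ξ (Fin.last (k + 1)) = b ∧
    ∀ i : Fin (k + 1), ContinuousOn x (Ico (ξ i.castSucc) (ξ i.succ)) ∧
      ∃ L : E n, Tendsto x (𝓝[<] ξ i.succ) (𝓝 L)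

/-- membership in the space `PC = PC([-h,0), ℝⁿ)`. -/
def PCh (h : ℝ) (w : ℝ → E n) : Prop := PCOn w (-h) 0

/-- `‖w‖₁ = ∫_{-h}^0 ‖w ξ‖ dξ`. -/
def norm1 (h : ℝ) (w : ℝ → E n) : ℝ := ∫ ξ in (-h)..(0:ℝ), ‖w ξ‖

/-- `‖w‖_∞ = sup_{ξ ∈ [-h,0)} ‖w ξ‖`. -/
def normInf (h : ℝ) (w : ℝ → E n) : ℝ := sSup ((fun ξ => ‖w ξ‖) '' Ico (-h) (0 : ℝ))

/-- `(z, w) ∈ P(α)`. -/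
def memP (h α : ℝ) (z : E n) (w : ℝ → E n) : Prop := PCh h w ∧ ‖z‖ ≤ α ∧ normInf h w ≤ α

/-- the history segment `x_t(ξ) = x (t + ξ)`. -/
def seg (x : ℝ → E n) (t : ℝ) : ℝ → E n := fun ξ => x (t + ξ)

/-- the constant right extension `κ(·)` of `(τ, z, w)`, i.e. the unique element of
`Λ₀(τ,z,w(·))`. -/
def ext0 (τ : ℝ) (z : E n) (w : ℝ → E n) : ℝ → E n := fun t => if t < τ then w (t - τ) else z

/-- the set `Λ(τ,z,w(·))` of Lipschitz right extensions. -/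
def Lam (ϑ h τ : ℝ) (z : E n) (w : ℝ → E n) : Set (ℝ → E n) :=
  {x | PCOn x (τ - h) ϑ ∧ x τ = z ∧ (∀ t ∈ Ico (τ - h) τ, x t = w (t - τ)) ∧
    ∃ K : ℝ≥0, LipschitzOnWith K x (Icc τ ϑ)}

/-- membership in the class `Φ`. -/
def InPhi (t0 ϑ h : ℝ) (φ : ℝ → E n → (ℝ → E n) → ℝ) : Prop :=
  (∀ (z : E n) (w : ℝ → E n), PCh h w → ContinuousOn (fun τ => φ τ z w) (Icc t0 ϑ)) ∧
  ∀ α > (0 : ℝ), ∃ lφ > (0 : ℝ), ∀ τ ∈ Icc t0 ϑ, ∀ (z z' : E n) (w w' : ℝ → E n),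
    memP h α z w → memP h α z' w' →
    |φ τ z w - φ τ z' w'| ≤ lφ * (‖z - z'‖ + norm1 h (fun ξ => w ξ - w' ξ))

/-- condition (C1). -/
def CondC1 (t0 ϑ h : ℝ) (f : ℝ → E n → (ℝ → E n) → E l → E m → E n)
    (f0 : ℝ → E n → (ℝ → E n) → E l → E m → ℝ) : Prop :=
  ∀ (x : E n) (r : ℝ → E n), PCh h r →
    ContinuousOn (fun p : ℝ × E l × E m => f p.1 x r p.2.1 p.2.2)
      (Icc t0 ϑ ×ˢ (univ : Set (E l × E m))) ∧
    ContinuousOn (fun p : ℝ × E l × E m => f0 p.1 x r p.2.1 p.2.2)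
      (Icc t0 ϑ ×ˢ (univ : Set (E l × E m)))

/-- condition (C2). -/
def CondC2 (t0 ϑ h : ℝ) (U : Set (E l)) (V : Set (E m))
    (f : ℝ → E n → (ℝ → E n) → E l → E m → E n)
    (f0 : ℝ → E n → (ℝ → E n) → E l → E m → ℝ) : Prop :=
  ∃ cf > (0 : ℝ), ∀ t ∈ Icc t0 ϑ, ∀ (x : E n) (r : ℝ → E n), PCh h r →
    ∀ u ∈ U, ∀ v ∈ V,
      ‖f t x r u v‖ + |f0 t x r u v| ≤ cf * (1 + ‖x‖ + norm1 h r + ‖r (-h)‖)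

/-- condition (C3). -/
def CondC3 (t0 ϑ h : ℝ) (U : Set (E l)) (V : Set (E m))
    (f : ℝ → E n → (ℝ → E n) → E l → E m → E n)
    (f0 : ℝ → E n → (ℝ → E n) → E l → E m → ℝ) : Prop :=
  ∀ α > (0 : ℝ), ∃ lf > (0 : ℝ), ∀ t ∈ Icc t0 ϑ, ∀ (x x' : E n) (r r' : ℝ → E n),
    memP h α x r → memP h α x' r' → ∀ u ∈ U, ∀ v ∈ V,
      ‖f t x r u v - f t x' r' u v‖ + |f0 t x r u v - f0 t x' r' u v| ≤
        lf * (‖x - x'‖ + norm1 h (fun ξ => r ξ - r' ξ) + ‖r (-h) - r' (-h)‖)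

/-- the Hamiltonian `H`. -/
def Ham (U : Set (E l)) (V : Set (E m))
    (f : ℝ → E n → (ℝ → E n) → E l → E m → E n)
    (f0 : ℝ → E n → (ℝ → E n) → E l → E m → ℝ)
    (τ : ℝ) (z : E n) (w : ℝ → E n) (s : E n) : ℝ :=
  ⨅ u : U, ⨆ v : V, (⟪f τ z w u v, s⟫ + f0 τ z w u v)

/-- condition (C4), Isaacs' condition. -/
def CondC4 (t0 ϑ h : ℝ) (U : Set (E l)) (V : Set (E m))
    (f : ℝ → E n → (ℝ → E n) → E l → E m → E n)
    (f0 : ℝ → E n → (ℝ → E n) → E l → E m → ℝ) : Prop :=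
  ∀ t ∈ Icc t0 ϑ, ∀ (x : E n) (r : ℝ → E n), PCh h r → ∀ s : E n,
    (⨅ u : U, ⨆ v : V, (⟪f t x r u v, s⟫ + f0 t x r u v)) =
    (⨆ v : V, ⨅ u : U, (⟪f t x r u v, s⟫ + f0 t x r u v))

/-- condition (C5). -/
def CondC5 (h : ℝ) (σ : E n → (ℝ → E n) → ℝ) : Prop :=
  ∀ α > (0 : ℝ), ∃ ls > (0 : ℝ), ∀ (x x' : E n) (r r' : ℝ → E n),
    memP h α x r → memP h α x' r' →
    |σ x r - σ x' r'| ≤ ls * (‖x - x'‖ + norm1 h (fun ξ => r ξ - r' ξ))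

/-- the set of admissible control realizations on `[τ, ϑ]` with values in `U`. -/
def Ctrl (ϑ τ : ℝ) {d : ℕ} (U : Set (E d)) : Set (ℝ → E d) :=
  {u | Measurable u ∧ ∀ t ∈ Icc τ ϑ, u t ∈ U}

/-- `x(·)` is the motion of the delay system generated from the initial position `(τ,z,w(·))`
by the control realizations `u(·)`, `v(·)`. -/
def IsMotion (ϑ h : ℝ) (f : ℝ → E n → (ℝ → E n) → E l → E m → E n)
    (τ : ℝ) (z : E n) (w : ℝ → E n) (u : ℝ → E l) (v : ℝ → E m) (x : ℝ → E n) : Prop :=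
  x τ = z ∧ (∀ t ∈ Ico (τ - h) τ, x t = w (t - τ)) ∧ PCOn x (τ - h) ϑ ∧
  (∃ K : ℝ≥0, LipschitzOnWith K x (Icc τ ϑ)) ∧
  ∀ᵐ t ∂(volume : Measure ℝ), t ∈ Icc τ ϑ → HasDerivAt x (f t (x t) (seg x t) (u t) (v t)) t

/-- `X` assigns to initial data and controls the unique generated motion. -/
def MotionMap (t0 ϑ h : ℝ) (U : Set (E l)) (V : Set (E m))
    (f : ℝ → E n → (ℝ → E n) → E l → E m → E n)
    (X : ℝ → E n → (ℝ → E n) → (ℝ → E l) → (ℝ → E m) → ℝ → E n) : Prop :=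
  ∀ τ ∈ Icc t0 ϑ, ∀ (z : E n) (w : ℝ → E n), PCh h w →
    ∀ u ∈ Ctrl ϑ τ U, ∀ v ∈ Ctrl ϑ τ V,
      IsMotion ϑ h f τ z w u v (X τ z w u v) ∧
      ∀ x' : ℝ → E n, IsMotion ϑ h f τ z w u v x' → EqOn x' (X τ z w u v) (Icc (τ - h) ϑ)

/-- the quality index `γ` along a motion. -/
def cost (ϑ : ℝ) (f0 : ℝ → E n → (ℝ → E n) → E l → E m → ℝ) (σ : E n → (ℝ → E n) → ℝ)
    (τ : ℝ) (x : ℝ → E n) (u : ℝ → E l) (v : ℝ → E m) : ℝ :=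
  σ (x ϑ) (seg x ϑ) + ∫ t in τ..ϑ, f0 t (x t) (seg x t) (u t) (v t)

/-- non-anticipative strategy of the first player. -/
def Nonant1 (ϑ τ : ℝ) (U : Set (E l)) (V : Set (E m)) (Q : (ℝ → E m) → ℝ → E l) : Prop :=
  (∀ v ∈ Ctrl ϑ τ V, Q v ∈ Ctrl ϑ τ U) ∧
  ∀ v ∈ Ctrl ϑ τ V, ∀ v' ∈ Ctrl ϑ τ V, ∀ t ∈ Icc τ ϑ,
    (∀ᵐ ξ ∂(volume : Measure ℝ), ξ ∈ Icc τ t → v ξ = v' ξ) →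
    (∀ᵐ ξ ∂(volume : Measure ℝ), ξ ∈ Icc τ t → Q v ξ = Q v' ξ)

/-- non-anticipative strategy of the second player. -/
def Nonant2 (ϑ τ : ℝ) (U : Set (E l)) (V : Set (E m)) (Q : (ℝ → E l) → ℝ → E m) : Prop :=
  (∀ u ∈ Ctrl ϑ τ U, Q u ∈ Ctrl ϑ τ V) ∧
  ∀ u ∈ Ctrl ϑ τ U, ∀ u' ∈ Ctrl ϑ τ U, ∀ t ∈ Icc τ ϑ,
    (∀ᵐ ξ ∂(volume : Measure ℝ), ξ ∈ Icc τ t → u ξ = u' ξ) →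
    (∀ᵐ ξ ∂(volume : Measure ℝ), ξ ∈ Icc τ t → Q u ξ = Q u' ξ)

/-- the lower value functional `ρᵘ`. -/
def rhoU (ϑ : ℝ) (U : Set (E l)) (V : Set (E m))
    (f0 : ℝ → E n → (ℝ → E n) → E l → E m → ℝ) (σ : E n → (ℝ → E n) → ℝ)
    (X : ℝ → E n → (ℝ → E n) → (ℝ → E l) → (ℝ → E m) → ℝ → E n)
    (τ : ℝ) (z : E n) (w : ℝ → E n) : ℝ :=
  ⨅ Q : {Q : (ℝ → E m) → ℝ → E l // Nonant1 ϑ τ U V Q},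
    ⨆ v : Ctrl ϑ τ V, cost ϑ f0 σ τ (X τ z w (Q.1 v.1) v.1) (Q.1 v.1) v.1

/-- the upper value functional `ρᵛ`. -/
def rhoV (ϑ : ℝ) (U : Set (E l)) (V : Set (E m))
    (f0 : ℝ → E n → (ℝ → E n) → E l → E m → ℝ) (σ : E n → (ℝ → E n) → ℝ)
    (X : ℝ → E n → (ℝ → E n) → (ℝ → E l) → (ℝ → E m) → ℝ → E n)
    (τ : ℝ) (z : E n) (w : ℝ → E n) : ℝ :=
  ⨆ Q : {Q : (ℝ → E l) → ℝ → E m // Nonant2 ϑ τ U V Q},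
    ⨅ u : Ctrl ϑ τ U, cost ϑ f0 σ τ (X τ z w u.1 (Q.1 u.1)) u.1 (Q.1 u.1)

/-- the neighborhood `O⁺_δ(τ,z)`. -/
def Oplus (δ τ : ℝ) (z : E n) : Set (ℝ × E n) := {p | p.1 ∈ Icc τ (τ + δ) ∧ ‖p.2 - z‖ ≤ δ}

/-- the terminal condition `φ(ϑ,z,w(·)) = σ(z,w(·))`. -/
def TerminalCond (ϑ h : ℝ) (σ : E n → (ℝ → E n) → ℝ) (φ : ℝ → E n → (ℝ → E n) → ℝ) : Prop :=
  ∀ (z : E n) (w : ℝ → E n), PCh h w → φ ϑ z w = σ z w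

/-- `φ ∈ Φ` is a viscosity solution of the Cauchy problem. -/
def IsViscositySol (t0 ϑ h : ℝ) (U : Set (E l)) (V : Set (E m))
    (f : ℝ → E n → (ℝ → E n) → E l → E m → E n)
    (f0 : ℝ → E n → (ℝ → E n) → E l → E m → ℝ) (σ : E n → (ℝ → E n) → ℝ)
    (φ : ℝ → E n → (ℝ → E n) → ℝ) : Prop :=
  InPhi t0 ϑ h φ ∧ TerminalCond ϑ h σ φ ∧
  (∀ τ ∈ Ico t0 ϑ, ∀ (z : E n) (w : ℝ → E n), PCh h w →
    ∀ ψ : ℝ × E n → ℝ, ContDiff ℝ 1 ψ → ∀ δ > (0 : ℝ),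
      (∀ p ∈ Oplus δ τ z, φ τ z w - ψ (τ, z) ≤ φ p.1 p.2 (seg (ext0 τ z w) p.1) - ψ p) →
      deriv (fun t => ψ (t, z)) τ +
        Ham U V f f0 τ z w (gradient (fun x => ψ (τ, x)) z) ≤ 0) ∧
  (∀ τ ∈ Ico t0 ϑ, ∀ (z : E n) (w : ℝ → E n), PCh h w →
    ∀ ψ : ℝ × E n → ℝ, ContDiff ℝ 1 ψ → ∀ δ > (0 : ℝ),
      (∀ p ∈ Oplus δ τ z, φ p.1 p.2 (seg (ext0 τ z w) p.1) - ψ p ≤ φ τ z w - ψ (τ, z)) →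
      0 ≤ deriv (fun t => ψ (t, z)) τ +
        Ham U V f f0 τ z w (gradient (fun x => ψ (τ, x)) z))

/-- `φ` has ci-derivatives `(c, g)` at `(τ,z,w(·))`. -/
def HasCiDerivAt (ϑ h : ℝ) (φ : ℝ → E n → (ℝ → E n) → ℝ) (c : ℝ) (g : E n)
    (τ : ℝ) (z : E n) (w : ℝ → E n) : Prop :=
  ∀ y ∈ Lam ϑ h τ z w,
    (fun p : ℝ × E n => φ p.1 p.2 (seg y p.1) - φ τ z w - (p.1 - τ) * c - ⟪p.2 - z, g⟫)
      =o[𝓝[Icc τ ϑ ×ˢ (univ : Set (E n))] ((τ, z) : ℝ × E n)]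
        fun p : ℝ × E n => |p.1 - τ| + ‖p.2 - z‖

/-- the subdifferential `D⁻φ(τ,z,w(·))`. -/
def Dminus (φ : ℝ → E n → (ℝ → E n) → ℝ) (τ : ℝ) (z : E n) (w : ℝ → E n) : Set (ℝ × E n) :=
  {p | ∀ ε > (0 : ℝ), ∃ δ > (0 : ℝ), ∀ q ∈ Oplus δ τ z, q ≠ ((τ, z) : ℝ × E n) →
    -ε ≤ (φ q.1 q.2 (seg (ext0 τ z w) q.1) - φ τ z w - (q.1 - τ) * p.1 - ⟪q.2 - z, p.2⟫) /
      (|q.1 - τ| + ‖q.2 - z‖)}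

/-- the superdifferential `D⁺φ(τ,z,w(·))`. -/
def Dplus (φ : ℝ → E n → (ℝ → E n) → ℝ) (τ : ℝ) (z : E n) (w : ℝ → E n) : Set (ℝ × E n) :=
  {q | ∀ ε > (0 : ℝ), ∃ δ > (0 : ℝ), ∀ p ∈ Oplus δ τ z, p ≠ ((τ, z) : ℝ × E n) →
    (φ p.1 p.2 (seg (ext0 τ z w) p.1) - φ τ z w - (p.1 - τ) * q.1 - ⟪p.2 - z, q.2⟫) /
      (|p.1 - τ| + ‖p.2 - z‖) ≤ ε}

/-- the lower right directional derivative `∂⁻_{(l0,l)} φ(τ,z,w(·))`. -/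
def lowerDirDeriv (φ : ℝ → E n → (ℝ → E n) → ℝ) (τ : ℝ) (z : E n) (w : ℝ → E n)
    (l0 : ℝ) (lv : E n) : ℝ :=
  Filter.liminf
    (fun p : ℝ × (ℝ × E n) =>
      (φ (τ + p.2.1 * p.1) (z + p.1 • p.2.2) (seg (ext0 τ z w) (τ + p.2.1 * p.1)) - φ τ z w) / p.1)
    ((𝓝[>] (0 : ℝ)) ×ˢ 𝓝[Ici (0 : ℝ) ×ˢ (univ : Set (E n))] ((l0, lv) : ℝ × E n))

/-- the upper right directional derivative `∂⁺_{(l0,l)} φ(τ,z,w(·))`. -/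
def upperDirDeriv (φ : ℝ → E n → (ℝ → E n) → ℝ) (τ : ℝ) (z : E n) (w : ℝ → E n)
    (l0 : ℝ) (lv : E n) : ℝ :=
  Filter.limsup
    (fun p : ℝ × (ℝ × E n) =>
      (φ (τ + p.2.1 * p.1) (z + p.1 • p.2.2) (seg (ext0 τ z w) (τ + p.2.1 * p.1)) - φ τ z w) / p.1)
    ((𝓝[>] (0 : ℝ)) ×ˢ 𝓝[Ici (0 : ℝ) ×ˢ (univ : Set (E n))] ((l0, lv) : ℝ × E n))

/-- the stability (u- and v-stability) property of a functional. -/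
def IsStable (t0 ϑ h : ℝ) (U : Set (E l)) (V : Set (E m))
    (f0 : ℝ → E n → (ℝ → E n) → E l → E m → ℝ)
    (X : ℝ → E n → (ℝ → E n) → (ℝ → E l) → (ℝ → E m) → ℝ → E n)
    (φ : ℝ → E n → (ℝ → E n) → ℝ) : Prop :=
  ∀ τ ∈ Icc t0 ϑ, ∀ (z : E n) (w : ℝ → E n), PCh h w → ∀ t ∈ Icc τ ϑ,
    (⨆ v : Ctrl ϑ τ V, ⨅ u : Ctrl ϑ τ U,
        (φ t (X τ z w u.1 v.1 t) (seg (X τ z w u.1 v.1) t) +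
          ∫ ξ in τ..t, f0 ξ (X τ z w u.1 v.1 ξ) (seg (X τ z w u.1 v.1) ξ) (u.1 ξ) (v.1 ξ)))
      ≤ φ τ z w ∧
    φ τ z w ≤
      ⨅ u : Ctrl ϑ τ U, ⨆ v : Ctrl ϑ τ V,
        (φ t (X τ z w u.1 v.1 t) (seg (X τ z w u.1 v.1) t) +
          ∫ ξ in τ..t, f0 ξ (X τ z w u.1 v.1 ξ) (seg (X τ z w u.1 v.1) ξ) (u.1 ξ) (v.1 ξ))
/-!
Along the constant extension `κ = ext0 τ z w`, ci-differentiability says exactly that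
`p ↦ φ p.1 p.2 (seg κ p.1)` is Fréchet differentiable at `(τ, z)` within `[τ, ϑ] × ℝⁿ`, with
derivative `(s, v) ↦ s * ∂^{ci}φ + ⟪∇_z φ, v⟫`. If `φ - ψ` has a one-sided extremum at `(τ, z)`,
Fermat's rule on this half-space forces `∇ψ = ∇_z φ` (all space directions are two-sided) and
compares `∂_τ ψ` with `∂^{ci}φ` (only the forward time direction is available). Substituting into
the Hamilton–Jacobi equation gives the two viscosity inequalities.
-/

section TimeSpace

variable {F : Type*} [NormedAddCommGroup F] [InnerProductSpace ℝ F]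

def timeSpaceForm (a : ℝ) (b : F) : ℝ × F →L[ℝ] ℝ :=
  a • ContinuousLinearMap.fst ℝ ℝ F + (innerSL ℝ b).comp (ContinuousLinearMap.snd ℝ ℝ F)

@[simp]
theorem timeSpaceForm_apply (a : ℝ) (b : F) (p : ℝ × F) :
    timeSpaceForm a b p = a * p.1 + ⟪b, p.2⟫ := by
  simp [timeSpaceForm]

theorem timeSpaceForm_sub (a a' : ℝ) (b b' : F) :
    timeSpaceForm a b - timeSpaceForm a' b' = timeSpaceForm (a - a') (b - b') := by
  refine ContinuousLinearMap.ext fun p => ?_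
  simp only [sub_apply, timeSpaceForm_apply, inner_sub_left]
  ring

theorem DifferentiableAt.hasFDerivAt_timeSpaceForm [CompleteSpace F] {ψ : ℝ × F → ℝ} {τ : ℝ}
    {z : F} (hψ : DifferentiableAt ℝ ψ (τ, z)) :
    HasFDerivAt ψ (timeSpaceForm (deriv (fun t => ψ (t, z)) τ)
      (gradient (fun x => ψ (τ, x)) z)) (τ, z) := by
  set D := fderiv ℝ ψ (τ, z)
  have hD : HasFDerivAt ψ D (τ, z) := hψ.hasFDerivAt
  have htime : deriv (fun t => ψ (t, z)) τ = D (1, 0) :=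
    (hD.comp (𝕜 := ℝ) τ (hasFDerivAt_prodMk_left τ z)).hasDerivAt.deriv
  have hspace : gradient (fun x => ψ (τ, x)) z =
      (InnerProductSpace.toDual ℝ F).symm (D.comp (ContinuousLinearMap.inr ℝ ℝ F)) :=
    (hD.comp z (hasFDerivAt_prodMk_right τ z)).hasGradientAt.gradient
  convert hD using 1
  ext p
  · simp [htime]
  · simp [hspace, InnerProductSpace.toDual_symm_apply]

theorem IsLocalMinOn.nonneg_and_eq_zero_of_hasFDerivWithinAt_timeSpaceForm
    {Φ : ℝ × F → ℝ} {τ ϑ a : ℝ} {z b : F} (hmin : IsLocalMinOn Φ (Icc τ ϑ ×ˢ univ) (τ, z))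
    (hτϑ : τ < ϑ) (hΦ : HasFDerivWithinAt Φ (timeSpaceForm a b) (Icc τ ϑ ×ˢ univ) (τ, z)) :
    0 ≤ a ∧ b = 0 := by
  have hcone : ∀ p ∈ Icc τ ϑ ×ˢ (univ : Set F),
      p - (τ, z) ∈ posTangentConeAt (Icc τ ϑ ×ˢ univ) (τ, z) := fun p hp =>
    sub_mem_posTangentConeAt_of_segment_subset <| ((convex_Icc τ ϑ).prod convex_univ).segment_subset
      ⟨left_mem_Icc.2 hτϑ.le, trivial⟩ hp
  constructor
  · have htime := hmin.hasFDerivWithinAt_nonneg hΦ (hcone (ϑ, z) ⟨right_mem_Icc.2 hτϑ.le, trivial⟩)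
    simp only [timeSpaceForm_apply, Prod.fst_sub, Prod.snd_sub, sub_self, inner_zero_right,
      add_zero] at htime
    exact nonneg_of_mul_nonneg_left htime (sub_pos.2 hτϑ)
  · have hspace : ∀ v : F, ⟪b, v⟫ = 0 := fun v => by
      simpa using hmin.hasFDerivWithinAt_eq_zero hΦ (y := (0, v))
        (by simpa using hcone (τ, z + v) ⟨left_mem_Icc.2 hτϑ.le, trivial⟩)
        (by simpa using hcone (τ, z - v) ⟨left_mem_Icc.2 hτϑ.le, trivial⟩)
    exact inner_self_eq_zero.1 (hspace b)

end TimeSpace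

theorem PCOn.congr {x y : ℝ → E n} {a b : ℝ} (hx : PCOn x a b) (hxy : EqOn x y (Ico a b)) :
    PCOn y a b := by
  obtain ⟨k, ξ, hmono, hξa, hξb, hpieces⟩ := hx
  refine ⟨k, ξ, hmono, hξa, hξb, fun i => ?_⟩
  obtain ⟨hcont, L, hL⟩ := hpieces i
  have hsub : Ico (ξ i.castSucc) (ξ i.succ) ⊆ Ico a b := Ico_subset_Ico
    (hξa ▸ hmono.monotone (Fin.zero_le _)) (hξb ▸ hmono.monotone (Fin.le_last _))
  refine ⟨hcont.congr fun t ht => (hxy (hsub ht)).symm, L, hL.congr' ?_⟩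
  filter_upwards [Ioo_mem_nhdsLT (hmono i.castSucc_lt_succ)] with t ht
  exact hxy (hsub (Ioo_subset_Ico_self ht))

theorem PCOn.comp_sub_const {x : ℝ → E n} {a b : ℝ} (hx : PCOn x a b) (τ : ℝ) :
    PCOn (fun t => x (t - τ)) (τ + a) (τ + b) := by
  obtain ⟨k, ξ, hmono, hξa, hξb, hpieces⟩ := hx
  refine ⟨k, fun i => τ + ξ i, hmono.const_add τ,
    congrArg (τ + ·) hξa, congrArg (τ + ·) hξb, fun i => ?_⟩
  obtain ⟨hcont, L, hL⟩ := hpieces i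
  have hshift : ∀ c : ℝ, Tendsto (fun t => t - τ) (𝓝[<] (τ + c)) (𝓝[<] c) := fun c => by
    refine tendsto_nhdsWithin_of_tendsto_nhds_of_eventually_within _ ?_ ?_
    · simpa using ((continuous_sub_right τ).tendsto (τ + c)).mono_left nhdsWithin_le_nhds
    · filter_upwards [self_mem_nhdsWithin] with t (ht : t < τ + c)
      exact (sub_lt_iff_lt_add').2 ht
  refine ⟨hcont.comp (continuousOn_id.sub continuousOn_const) fun t ht => ?_, L, hL.comp (hshift _)⟩
  simp only [mem_Ico] at ht ⊢
  constructor <;> linarith [ht.1, ht.2]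

theorem PCOn.snoc {x : ℝ → E n} {a b c : ℝ} (hx : PCOn x a b) (hbc : b < c)
    (hcont : ContinuousOn x (Ico b c)) (hlim : ∃ L, Tendsto x (𝓝[<] c) (𝓝 L)) :
    PCOn x a c := by
  obtain ⟨k, ξ, hmono, hξa, hξb, hpieces⟩ := hx
  refine ⟨k + 1, Fin.snoc (α := fun _ => ℝ) ξ c, ?_, ?_, Fin.snoc_last _ _, ?_⟩
  · refine Fin.strictMono_iff_lt_succ.2 fun i => ?_
    induction i using Fin.lastCases with
    | last => rwa [Fin.snoc_castSucc, Fin.succ_last, Fin.snoc_last, hξb]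
    | cast j =>
      rw [Fin.succ_castSucc, Fin.snoc_castSucc, Fin.snoc_castSucc]
      exact hmono j.castSucc_lt_succ
  · rwa [← Fin.castSucc_zero, Fin.snoc_castSucc]
  · intro i
    induction i using Fin.lastCases with
    | last =>
      rw [Fin.snoc_castSucc, Fin.succ_last, Fin.snoc_last, hξb]
      exact ⟨hcont, hlim⟩
    | cast j =>
      rw [Fin.succ_castSucc, Fin.snoc_castSucc, Fin.snoc_castSucc]
      exact hpieces j

theorem ext0_mem_lam {ϑ h τ : ℝ} {z : E n} {w : ℝ → E n} (hτϑ : τ < ϑ) (hw : PCh h w) :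
    ext0 τ z w ∈ Lam ϑ h τ z w := by
  have hconst : EqOn (fun _ => z) (ext0 τ z w) (Ici τ) := fun t (ht : τ ≤ t) => by
    simp [ext0, not_lt.2 ht]
  have hpast : PCOn (ext0 τ z w) (τ - h) τ := by
    have := hw.comp_sub_const τ
    rw [← sub_eq_add_neg, add_zero] at this
    exact this.congr fun t ht => by simp [ext0, ht.2]
  refine ⟨hpast.snoc hτϑ ?_ ⟨z, ?_⟩, by simp [ext0], fun t ht => by simp [ext0, ht.2], 0, ?_⟩
  · exact continuousOn_const.congr fun t ht => (hconst ht.1).symm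
  · refine tendsto_const_nhds.congr' ?_
    filter_upwards [Ioo_mem_nhdsLT hτϑ] with t ht
    exact hconst (le_of_lt ht.1)
  · intro s hs t ht
    simp [← hconst hs.1, ← hconst ht.1]

theorem oplus_mem_nhdsWithin {δ : ℝ} (hδ : 0 < δ) (τ ϑ : ℝ) (z : E n) :
    Oplus δ τ z ∈ 𝓝[Icc τ ϑ ×ˢ univ] (τ, z) := by
  filter_upwards [self_mem_nhdsWithin,
    mem_nhdsWithin_of_mem_nhds (Metric.closedBall_mem_nhds ((τ, z) : ℝ × E n) hδ)]
    with p hp hball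
  rw [Metric.mem_closedBall, Prod.dist_eq, max_le_iff, Real.dist_eq, dist_eq_norm] at hball
  exact ⟨⟨hp.1.1, by linarith [le_abs_self (p.1 - τ)]⟩, hball.2⟩

section CiDeriv

variable {ϑ h τ c : ℝ} {φ : ℝ → E n → (ℝ → E n) → ℝ} {z g : E n} {w y : ℝ → E n}

/-- `seg y τ` agrees with `w` only on `[-h, 0)`; equality of the values comes from the
little-o bound evaluated at the base point itself. -/
theorem HasCiDerivAt.apply_seg_self (hci : HasCiDerivAt ϑ h φ c g τ z w) (hτϑ : τ ≤ ϑ)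
    (hy : y ∈ Lam ϑ h τ z w) : φ τ z (seg y τ) = φ τ z w := by
  have hbase := ((hci y hy).bound one_pos).self_of_nhdsWithin ⟨left_mem_Icc.2 hτϑ, trivial⟩
  simpa [sub_eq_zero] using hbase

theorem HasCiDerivAt.hasFDerivWithinAt (hci : HasCiDerivAt ϑ h φ c g τ z w) (hτϑ : τ ≤ ϑ)
    (hy : y ∈ Lam ϑ h τ z w) :
    HasFDerivWithinAt (fun p : ℝ × E n => φ p.1 p.2 (seg y p.1)) (timeSpaceForm c g)
      (Icc τ ϑ ×ˢ univ) (τ, z) := by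
  have hbound : (fun p : ℝ × E n => |p.1 - τ| + ‖p.2 - z‖)
      =O[𝓝[Icc τ ϑ ×ˢ univ] (τ, z)] fun p => p - (τ, z) := by
    refine IsBigO.of_bound 2 (Eventually.of_forall fun p => ?_)
    have h1 : |p.1 - τ| ≤ ‖p - (τ, z)‖ := norm_fst_le (p - (τ, z))
    have h2 : ‖p.2 - z‖ ≤ ‖p - (τ, z)‖ := norm_snd_le (p - (τ, z))
    rw [Real.norm_of_nonneg (by positivity)]
    linarith
  refine HasFDerivWithinAt.of_isLittleO (((hci y hy).trans_isBigO hbound).congr_left fun p => ?_)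
  simp only [hci.apply_seg_self hτϑ hy, timeSpaceForm_apply, Prod.fst_sub, Prod.snd_sub,
    real_inner_comm g]
  ring

theorem HasCiDerivAt.deriv_le_and_gradient_eq_of_minOn_oplus (hci : HasCiDerivAt ϑ h φ c g τ z w)
    (hτϑ : τ < ϑ) (hw : PCh h w) {ψ : ℝ × E n → ℝ} (hψ : DifferentiableAt ℝ ψ (τ, z))
    {δ : ℝ} (hδ : 0 < δ)
    (hmin : ∀ p ∈ Oplus δ τ z, φ τ z w - ψ (τ, z) ≤ φ p.1 p.2 (seg (ext0 τ z w) p.1) - ψ p) :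
    deriv (fun t => ψ (t, z)) τ ≤ c ∧ gradient (fun x => ψ (τ, x)) z = g := by
  have hκ := ext0_mem_lam (z := z) hτϑ hw
  have hderiv := (hci.hasFDerivWithinAt hτϑ.le hκ).sub
    (DifferentiableAt.hasFDerivAt_timeSpaceForm hψ).hasFDerivWithinAt
  rw [timeSpaceForm_sub] at hderiv
  have hlocal : IsLocalMinOn (fun p : ℝ × E n => φ p.1 p.2 (seg (ext0 τ z w) p.1) - ψ p)
      (Icc τ ϑ ×ˢ univ) (τ, z) := by
    filter_upwards [oplus_mem_nhdsWithin hδ τ ϑ z] with p hp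
    rw [hci.apply_seg_self hτϑ.le hκ]
    exact hmin p hp
  obtain ⟨hc, hg⟩ :=
    IsLocalMinOn.nonneg_and_eq_zero_of_hasFDerivWithinAt_timeSpaceForm hlocal hτϑ hderiv
  exact ⟨sub_nonneg.1 hc, (sub_eq_zero.1 hg).symm⟩

theorem HasCiDerivAt.le_deriv_and_gradient_eq_of_maxOn_oplus (hci : HasCiDerivAt ϑ h φ c g τ z w)
    (hτϑ : τ < ϑ) (hw : PCh h w) {ψ : ℝ × E n → ℝ} (hψ : DifferentiableAt ℝ ψ (τ, z))
    {δ : ℝ} (hδ : 0 < δ)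
    (hmax : ∀ p ∈ Oplus δ τ z, φ p.1 p.2 (seg (ext0 τ z w) p.1) - ψ p ≤ φ τ z w - ψ (τ, z)) :
    c ≤ deriv (fun t => ψ (t, z)) τ ∧ gradient (fun x => ψ (τ, x)) z = g := by
  have hκ := ext0_mem_lam (z := z) hτϑ hw
  have hderiv := (DifferentiableAt.hasFDerivAt_timeSpaceForm hψ).hasFDerivWithinAt.sub
    (hci.hasFDerivWithinAt hτϑ.le hκ)
  rw [timeSpaceForm_sub] at hderiv
  have hlocal : IsLocalMinOn (fun p : ℝ × E n => ψ p - φ p.1 p.2 (seg (ext0 τ z w) p.1))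
      (Icc τ ϑ ×ˢ univ) (τ, z) := by
    filter_upwards [oplus_mem_nhdsWithin hδ τ ϑ z] with p hp
    rw [hci.apply_seg_self hτϑ.le hκ]
    linarith [hmax p hp]
  obtain ⟨hc, hg⟩ :=
    IsLocalMinOn.nonneg_and_eq_zero_of_hasFDerivWithinAt_timeSpaceForm hlocal hτϑ hderiv
  exact ⟨sub_nonneg.1 hc, sub_eq_zero.1 hg⟩

end CiDeriv

theorem ci_smooth_solution_is_viscosity_solution_general
    (t0 ϑ h : ℝ) (n : ℕ)
    (l m : ℕ) (U : Set (E l)) (V : Set (E m))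
    (f : ℝ → E n → (ℝ → E n) → E l → E m → E n)
    (f0 : ℝ → E n → (ℝ → E n) → E l → E m → ℝ) (σ : E n → (ℝ → E n) → ℝ)
    (φ : ℝ → E n → (ℝ → E n) → ℝ) (hφ : InPhi t0 ϑ h φ)
    (c : ℝ → E n → (ℝ → E n) → ℝ) (g : ℝ → E n → (ℝ → E n) → E n)
    (hci : ∀ τ ∈ Ico t0 ϑ, ∀ (z : E n) (w : ℝ → E n), PCh h w →
        HasCiDerivAt ϑ h φ (c τ z w) (g τ z w) τ z w)
    (hHJ : ∀ τ ∈ Ico t0 ϑ, ∀ (z : E n) (w : ℝ → E n), PCh h w →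
        c τ z w + Ham U V f f0 τ z w (g τ z w) = 0)
    (hterm : TerminalCond ϑ h σ φ) :
    IsViscositySol t0 ϑ h U V f f0 σ φ := by
  refine ⟨hφ, hterm, ?_, ?_⟩
  · intro τ hτ z w hw ψ hψ δ hδ hmin
    obtain ⟨hle, hgrad⟩ := (hci τ hτ z w hw).deriv_le_and_gradient_eq_of_minOn_oplus hτ.2 hw
      (hψ.differentiable one_ne_zero _) hδ hmin
    rw [hgrad]
    linarith [hHJ τ hτ z w hw]
  · intro τ hτ z w hw ψ hψ δ hδ hmax
    obtain ⟨hle, hgrad⟩ := (hci τ hτ z w hw).le_deriv_and_gradient_eq_of_maxOn_oplus hτ.2 hw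
      (hψ.differentiable one_ne_zero _) hδ hmax
    rw [hgrad]
    linarith [hHJ τ hτ z w hw]

theorem ci_smooth_solution_is_viscosity_solution
    (t0 ϑ h : ℝ) (hth : t0 < ϑ) (hh : 0 < h) (n : ℕ) (hn : 0 < n)
    (l m : ℕ) (U : Set (E l)) (V : Set (E m))
    (hUc : IsCompact U) (hVc : IsCompact V) (hUne : U.Nonempty) (hVne : V.Nonempty)
    (f : ℝ → E n → (ℝ → E n) → E l → E m → E n)
    (f0 : ℝ → E n → (ℝ → E n) → E l → E m → ℝ) (σ : E n → (ℝ → E n) → ℝ)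
    (hC1 : CondC1 t0 ϑ h f f0) (hC2 : CondC2 t0 ϑ h U V f f0)
    (hC3 : CondC3 t0 ϑ h U V f f0) (hC4 : CondC4 t0 ϑ h U V f f0) (hC5 : CondC5 h σ)
    (φ : ℝ → E n → (ℝ → E n) → ℝ) (hφ : InPhi t0 ϑ h φ)
    (c : ℝ → E n → (ℝ → E n) → ℝ) (g : ℝ → E n → (ℝ → E n) → E n)
    (hci : ∀ τ ∈ Ico t0 ϑ, ∀ (z : E n) (w : ℝ → E n), PCh h w →
        HasCiDerivAt ϑ h φ (c τ z w) (g τ z w) τ z w)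
    (hHJ : ∀ τ ∈ Ico t0 ϑ, ∀ (z : E n) (w : ℝ → E n), PCh h w →
        c τ z w + Ham U V f f0 τ z w (g τ z w) = 0)
    (hterm : TerminalCond ϑ h σ φ) :
    IsViscositySol t0 ϑ h U V f f0 σ φ :=
  ci_smooth_solution_is_viscosity_solution_general t0 ϑ h n l m U V f f0 σ φ hφ c g hci hHJ hterm

end DGPaper
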